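/- Under the same hypotheses as the upper-expectation Hoeffding inequality (bounded X_i with range ≤ B_i, factorization of upper expectations over nonnegative products), for any ε > 0 the upper probability satisfies P̄(Σ_{i=1}^n (X_i − E̲[X_i]) ≤ −ε) ≤ exp(−2ε²/γ_n), where E̲[X] = inf_{P∈K} E_P[X]. -/

import Mathlib

/-!
Chernoff's bound with the tilt `exp (-l · Σ (X_i - E̲[X_i]))` holds under every `P ∈ K`, so it
bounds the upper probability by `exp (-l ε)` times an upper expectation of a product. The
factorization hypothesis splits that into `∏ Ē[exp (-l (X_i - E̲[X_i]))]`, and since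
`E̲[X_i] ≤ E_P[X_i]` each factor is at most Hoeffding's lemma bound `exp (l² B_i² / 8)` under
each `P`. Optimizing, `l = 4 ε / γ_n`.
-/

open MeasureTheory ProbabilityTheory Real

namespace Real

variable {ι : Type*} {s : Set ι} {g : ι → ℝ}

lemma biSup_le {a : ℝ} (h : ∀ i ∈ s, g i ≤ a) (ha : 0 ≤ a) : ⨆ i ∈ s, g i ≤ a :=
  Real.iSup_le (fun i => Real.iSup_le (h i) ha) ha

lemma biSup_nonneg (h : ∀ i ∈ s, 0 ≤ g i) : 0 ≤ ⨆ i ∈ s, g i :=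
  Real.iSup_nonneg fun i => Real.iSup_nonneg (h i)

lemma le_biSup_of_forall_le {C : ℝ} (hC : ∀ j ∈ s, g j ≤ C) {i : ι} (hi : i ∈ s) :
    g i ≤ ⨆ j ∈ s, g j := by
  have hbdd : BddAbove (Set.range fun j => ⨆ _ : j ∈ s, g j) :=
    ⟨max C 0, by
      rintro _ ⟨j, rfl⟩
      exact Real.iSup_le (fun hj => (hC j hj).trans (le_max_left _ _)) (le_max_right _ _)⟩
  exact (le_ciSup_of_le hbdd i (ciSup_pos (f := fun _ => g i) hi).ge)

lemma biInf_le_of_forall_le {C : ℝ} (hC : ∀ j ∈ s, C ≤ g j) {i : ι} (hi : i ∈ s) :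
    ⨅ j ∈ s, g j ≤ g i := by
  have hbdd : BddBelow (Set.range fun j => ⨅ _ : j ∈ s, g j) :=
    ⟨min C 0, by
      rintro _ ⟨j, rfl⟩
      exact Real.le_iInf (fun hj => (min_le_left _ _).trans (hC j hj)) (min_le_right _ _)⟩
  exact (ciInf_le_of_le hbdd i (ciInf_pos (f := fun _ => g i) hi).le)

end Real

lemma exists_forall_mem_Icc_of_sub_le {Ω : Type*} {X : Ω → ℝ} {B : ℝ}
    (h : ∀ ω ω', X ω - X ω' ≤ B) : ∃ a, ∀ ω, X ω ∈ Set.Icc a (a + B) := by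
  rcases isEmpty_or_nonempty Ω with hΩ | ⟨⟨ω₀⟩⟩
  · exact ⟨0, isEmptyElim⟩
  have hbdd : BddBelow (Set.range X) :=
    ⟨X ω₀ - B, by rintro _ ⟨ω, rfl⟩; linarith [h ω₀ ω]⟩
  refine ⟨sInf (Set.range X), fun ω => ⟨csInf_le hbdd ⟨ω, rfl⟩, ?_⟩⟩
  have : X ω - B ≤ sInf (Set.range X) :=
    le_csInf ⟨X ω, ω, rfl⟩ (by rintro _ ⟨ω', rfl⟩; linarith [h ω ω'])
  linarith

section

variable {Ω : Type*} [MeasurableSpace Ω]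

lemma integral_exp_neg_mul_sub_le {P : Measure Ω} [IsProbabilityMeasure P] {X : Ω → ℝ}
    (hX : Measurable X) {a b : ℝ} (hab : ∀ ω, X ω ∈ Set.Icc a b) {l m : ℝ} (hl : 0 ≤ l)
    (hm : m ≤ ∫ ω, X ω ∂P) :
    ∫ ω, exp (-l * (X ω - m)) ∂P ≤ exp (l ^ 2 * (b - a) ^ 2 / 8) := by
  set μX := ∫ ω, X ω ∂P
  have hoeffding : ∫ ω, exp (-l * (X ω - μX)) ∂P ≤ exp (l ^ 2 * (b - a) ^ 2 / 8) := by
    have hvar : (((‖b - a‖₊ / 2) ^ 2 : NNReal) : ℝ) = (b - a) ^ 2 / 4 := by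
      push_cast [coe_nnnorm, Real.norm_eq_abs, div_pow, sq_abs]; norm_num
    have := (hasSubgaussianMGF_of_mem_Icc (μ := P) hX.aemeasurable
      (Filter.Eventually.of_forall hab)).mgf_le (-l)
    rw [hvar] at this
    calc ∫ ω, exp (-l * (X ω - μX)) ∂P = mgf (fun ω => X ω - μX) P (-l) := rfl
      _ ≤ exp ((b - a) ^ 2 / 4 * (-l) ^ 2 / 2) := this
      _ = exp (l ^ 2 * (b - a) ^ 2 / 8) := by ring_nf
  have hshift : exp (-l * (μX - m)) ≤ 1 := exp_le_one_iff.2 (by nlinarith)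
  calc ∫ ω, exp (-l * (X ω - m)) ∂P
      = exp (-l * (μX - m)) * ∫ ω, exp (-l * (X ω - μX)) ∂P := by
        rw [← integral_const_mul]; congr 1 with ω; rw [← exp_add]; ring_nf
    _ ≤ 1 * exp (l ^ 2 * (b - a) ^ 2 / 8) :=
        mul_le_mul hshift hoeffding (integral_nonneg fun _ => (exp_pos _).le) zero_le_one
    _ = _ := one_mul _

lemma integral_mem_Icc_of_forall_mem_Icc {P : Measure Ω} [IsProbabilityMeasure P] {f : Ω → ℝ}
    (hf : Measurable f) {a b : ℝ} (hab : ∀ ω, f ω ∈ Set.Icc a b) :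
    ∫ ω, f ω ∂P ∈ Set.Icc a b := by
  have hint := Integrable.of_mem_Icc a b hf.aemeasurable (ae_of_all P hab)
  exact ⟨by simpa using integral_mono (integrable_const a) hint fun ω => (hab ω).1,
    by simpa using integral_mono hint (integrable_const b) fun ω => (hab ω).2⟩

variable {K : Set (Measure Ω)}

lemma biSup_measure_le_le_exp_mul_biSup_integral (hK : ∀ P ∈ K, IsProbabilityMeasure P)
    {Y : Ω → ℝ} (hY : Measurable Y) {s : ℝ} (hs : ∀ ω, s ≤ Y ω) {l : ℝ} (hl : 0 ≤ l) (x : ℝ) :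
    ⨆ P ∈ K, (P {ω | Y ω ≤ x}).toReal ≤ exp (l * x) * ⨆ P ∈ K, ∫ ω, exp (-l * Y ω) ∂P := by
  have hmeas : Measurable fun ω => exp (-l * Y ω) := by fun_prop
  have hbound : ∀ ω, exp (-l * Y ω) ∈ Set.Icc 0 (exp (-l * s)) := fun ω =>
    ⟨(exp_pos _).le, exp_le_exp.2 (by nlinarith [hs ω])⟩
  have hsup : ∀ P ∈ K, ∫ ω, exp (-l * Y ω) ∂P ≤ ⨆ Q ∈ K, ∫ ω, exp (-l * Y ω) ∂Q :=
    fun P hP => Real.le_biSup_of_forall_le (g := fun Q => ∫ ω, exp (-l * Y ω) ∂Q)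
      (fun Q hQ => haveI := hK Q hQ; (integral_mem_Icc_of_forall_mem_Icc hmeas hbound).2) hP
  refine Real.biSup_le (fun P hP => ?_) ?_
  · have := hK P hP
    have hint := Integrable.of_mem_Icc _ _ hmeas.aemeasurable (ae_of_all P hbound)
    calc (P {ω | Y ω ≤ x}).toReal ≤ exp (- -l * x) * mgf Y P (-l) :=
          measure_le_le_exp_mul_mgf x (by linarith) hint
      _ ≤ exp (l * x) * ⨆ Q ∈ K, ∫ ω, exp (-l * Y ω) ∂Q := by
          rw [neg_neg]; gcongr; exact hsup P hP
  · exact mul_nonneg (exp_pos _).le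
      (Real.biSup_nonneg fun P _ => integral_nonneg fun ω => (exp_pos _).le)

lemma biSup_integral_exp_neg_mul_sub_biInf_le (hK : ∀ P ∈ K, IsProbabilityMeasure P)
    {X : Ω → ℝ} (hX : Measurable X) {a b : ℝ} (hab : ∀ ω, X ω ∈ Set.Icc a b) {l : ℝ}
    (hl : 0 ≤ l) :
    ⨆ P ∈ K, ∫ ω, exp (-l * (X ω - ⨅ Q ∈ K, ∫ ω', X ω' ∂Q)) ∂P ≤
      exp (l ^ 2 * (b - a) ^ 2 / 8) := by
  have hmean : ∀ Q ∈ K, a ≤ ∫ ω, X ω ∂Q := fun Q hQ =>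
    haveI := hK Q hQ; (integral_mem_Icc_of_forall_mem_Icc hX hab).1
  refine Real.biSup_le (fun P hP => ?_) (exp_pos _).le
  have := hK P hP
  exact integral_exp_neg_mul_sub_le hX hab hl (Real.biInf_le_of_forall_le hmean hP)

end

theorem upper_hoeffding_lower_tail_general {Ω : Type*} [MeasurableSpace Ω]
    (K : Set (Measure Ω)) (hKp : ∀ P ∈ K, IsProbabilityMeasure P)
    (n : ℕ) (X : ℕ → Ω → ℝ) (hmeas : ∀ i, Measurable (X i))
    (B : ℕ → ℝ)
    (hrange : ∀ i ∈ Finset.Icc 1 n, ∀ ω ω', X i ω - X i ω' ≤ B i)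
    (hfact : ∀ f : ℕ → ℝ → ℝ,
      (∀ i x, 0 ≤ f i x) → (∀ i, ∃ C, ∀ x, f i x ≤ C) → (∀ i, Measurable (f i)) →
      (⨆ P ∈ K, ∫ ω, ∏ i ∈ Finset.Icc 1 n, f i (X i ω) ∂P) ≤
        ∏ i ∈ Finset.Icc 1 n, ⨆ P ∈ K, ∫ ω, f i (X i ω) ∂P)
    (γ : ℝ) (hγ : γ = ∑ i ∈ Finset.Icc 1 n, (B i) ^ 2) (hγpos : 0 < γ)
    (ε : ℝ) (hε : 0 < ε) :
    (⨆ P ∈ K,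
        (P {ω | ∑ i ∈ Finset.Icc 1 n, (X i ω - ⨅ Q ∈ K, ∫ ω', X i ω' ∂Q) ≤ -ε}).toReal) ≤
      Real.exp (-2 * ε ^ 2 / γ) := by
  set I := Finset.Icc 1 n
  set m : ℕ → ℝ := fun i => ⨅ Q ∈ K, ∫ ω', X i ω' ∂Q
  choose! c hc using fun i hi => exists_forall_mem_Icc_of_sub_le (hrange i hi)
  set l := 4 * ε / γ
  have hl : 0 ≤ l := by positivity
  -- truncating at `c i` makes each factor bounded without changing it on the range of `X i`
  set f : ℕ → ℝ → ℝ := fun i x => exp (-l * (max x (c i) - m i))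
  have hf : ∀ i ∈ I, (fun ω => f i (X i ω)) = fun ω => exp (-l * (X i ω - m i)) :=
    fun i hi => funext fun ω => by simp only [f, max_eq_left (hc i hi ω).1]
  have hprod : (fun ω => ∏ i ∈ I, f i (X i ω)) = fun ω => exp (-l * ∑ i ∈ I, (X i ω - m i)) :=
    funext fun ω => by rw [Finset.prod_congr rfl fun i hi => congrFun (hf i hi) ω, ← exp_sum,
      Finset.mul_sum]
  have hfactor : ∀ i ∈ I, ⨆ P ∈ K, ∫ ω, f i (X i ω) ∂P ≤ exp (l ^ 2 * B i ^ 2 / 8) := by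
    intro i hi
    have := biSup_integral_exp_neg_mul_sub_biInf_le hKp (hmeas i) (hc i hi) hl
    rwa [add_sub_cancel_left, ← hf i hi] at this
  have hupper := hfact f (fun _ _ => (exp_pos _).le)
    (fun i => ⟨exp (-l * (c i - m i)),
      fun x => exp_le_exp.2 (by nlinarith [le_max_right x (c i)])⟩)
    (fun i => by fun_prop)
  rw [hprod] at hupper
  calc _ ≤ exp (l * -ε) * ⨆ P ∈ K, ∫ ω, exp (-l * ∑ i ∈ I, (X i ω - m i)) ∂P :=
        biSup_measure_le_le_exp_mul_biSup_integral hKp (by fun_prop)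
          (fun ω => Finset.sum_le_sum fun i hi => sub_le_sub_right (hc i hi ω).1 _) hl (-ε)
    _ ≤ exp (l * -ε) * ∏ i ∈ I, exp (l ^ 2 * B i ^ 2 / 8) := by
        gcongr
        exact hupper.trans (Finset.prod_le_prod (fun i _ => Real.biSup_nonneg fun P _ =>
          integral_nonneg fun ω => (exp_pos _).le) hfactor)
    _ = exp (-2 * ε ^ 2 / γ) := by
        rw [← exp_sum, ← exp_add, ← Finset.sum_div, ← Finset.mul_sum, ← hγ]
        congr 1
        simp only [l]
        field_simp
        ring

/-- Hoeffding-type inequality for upper expectations: if bounded variables `X_1, …, X_n`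
(with range of `X_i` of length at most `B_i`) satisfy the factorization property
`Ē[∏ f_i(X_i)] ≤ ∏ Ē[f_i(X_i)]` for bounded nonnegative `f_i`, then for `γ_n = Σ B_i² > 0`
and `ε > 0`, `P̄(Σ (X_i - E̲[X_i]) ≤ -ε) ≤ exp (-2ε²/γ_n)`. -/
theorem upper_hoeffding_lower_tail {Ω : Type*} [MeasurableSpace Ω]
    (K : Set (Measure Ω)) (hK : K.Nonempty) (hKp : ∀ P ∈ K, IsProbabilityMeasure P)
    (n : ℕ) (hn : 0 < n) (X : ℕ → Ω → ℝ) (hmeas : ∀ i, Measurable (X i))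
    (B : ℕ → ℝ)
    (hrange : ∀ i ∈ Finset.Icc 1 n, ∀ ω ω', X i ω - X i ω' ≤ B i)
    (hfact : ∀ f : ℕ → ℝ → ℝ,
      (∀ i x, 0 ≤ f i x) → (∀ i, ∃ C, ∀ x, f i x ≤ C) → (∀ i, Measurable (f i)) →
      (⨆ P ∈ K, ∫ ω, ∏ i ∈ Finset.Icc 1 n, f i (X i ω) ∂P) ≤
        ∏ i ∈ Finset.Icc 1 n, ⨆ P ∈ K, ∫ ω, f i (X i ω) ∂P)
    (γ : ℝ) (hγ : γ = ∑ i ∈ Finset.Icc 1 n, (B i) ^ 2) (hγpos : 0 < γ)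
    (ε : ℝ) (hε : 0 < ε) :
    (⨆ P ∈ K,
        (P {ω | ∑ i ∈ Finset.Icc 1 n, (X i ω - ⨅ Q ∈ K, ∫ ω', X i ω' ∂Q) ≤ -ε}).toReal) ≤
      Real.exp (-2 * ε ^ 2 / γ) :=
  upper_hoeffding_lower_tail_general K hKp n X hmeas B hrange hfact γ hγ hγpos ε hε
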